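/- Let p > 2, q = p/(p-1), ε ∈ (0,1/2), δ = 2q(q-1)ε/85, and let Q be the Nazarov–Treil Bellman function. In Ω_b = {|ζ|^p < |η|^q}, for |φ| ≤ arctan(2√(p-1)/(p-2)) and ω₁, ω₂ ∈ ℝ²: ⟨(H₂(Q) + tan φ · I₂(Q))(ζ,η) ω₁, ω₂⟩ ≥ -8δ|ω₁||ω₂|, where H₂(Q) is the mixed ζ-η Hessian block and I₂(Q) = (1/2)[[∂²_{ζ₂η₁}Q - ∂²_{ζ₁η₂}Q, ∂²_{ζ₁η₁}Q + ∂²_{ζ₂η₂}Q],[-∂²_{ζ₁η₁}Q - ∂²_{ζ₂η₂}Q, ∂²_{ζ₂η₁}Q - ∂²_{ζ₁η₂}Q]]. -/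

import Mathlib

/-!
On `Ω_b` the Bellman function is `|ζ|^p + |η|^q + δ|ζ|²|η|^{2-q}`, so its mixed Hessian block is
of rank one, `H₂ = c ζ ηᵀ` with `c = 2δ(2-q)|η|^{-q}`, and `I₂` has the shape `!![a, b; -b, a]`,
i.e. acts on `ℝ² ≅ ℂ` as multiplication by a complex number of modulus `c|ζ||η|/2`. Hence the form
is bounded by `c|ζ||η|(1 + |tan φ|/2)|ω₁||ω₂|`. On `Ω_b` we have `|ζ| ≤ |η|^{q-1}`, so
`c|ζ||η| ≤ 2δ(2-q)`, and `|tan φ| ≤ T := 2√(p-1)/(p-2)` with `(2-q)(2+T) = 2(2-q) + 2/√(p-1) ≤ 4`.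
-/

noncomputable section
open Real Matrix

def qexp (p : ℝ) : ℝ := p / (p - 1)

/-- The Nazarov–Treil Bellman function on `ℂ × ℂ ≅ ℝ² × ℝ²`. -/
def Q (p δ : ℝ) (ζ η : ℂ) : ℝ :=
  if ‖ζ‖ ^ p ≤ ‖η‖ ^ qexp p then
    ‖ζ‖ ^ p + ‖η‖ ^ qexp p +
      δ * (‖ζ‖ ^ (2 : ℝ) * ‖η‖ ^ (2 - qexp p))
  else
    ‖ζ‖ ^ p + ‖η‖ ^ qexp p +
      δ * ((2 / p) * ‖ζ‖ ^ p + (2 / qexp p - 1) * ‖η‖ ^ qexp p)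

/-- Coordinate directions in `ℂ ≅ ℝ²`. -/
def dir : Fin 2 → ℂ := ![1, Complex.I]

/-- Partial derivative of `Q` in the `i`-th coordinate of the `ζ` variable. -/
def dζ (p δ : ℝ) (i : Fin 2) (ζ η : ℂ) : ℝ :=
  deriv (fun t : ℝ => Q p δ (ζ + (t : ℂ) * dir i) η) 0

/-- Partial derivative of `Q` in the `i`-th coordinate of the `η` variable. -/
def dη (p δ : ℝ) (i : Fin 2) (ζ η : ℂ) : ℝ :=
  deriv (fun t : ℝ => Q p δ ζ (η + (t : ℂ) * dir i)) 0

/-- The `ζζ` block of the Hessian of `Q`: `(H₁)ᵢⱼ = ∂²_{ζᵢζⱼ} Q`. -/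
def H1 (p δ : ℝ) (ζ η : ℂ) : Matrix (Fin 2) (Fin 2) ℝ :=
  Matrix.of fun i j => deriv (fun s : ℝ => dζ p δ j (ζ + (s : ℂ) * dir i) η) 0

/-- The mixed `ζη` block of the Hessian of `Q`: `(H₂)ᵢⱼ = ∂²_{ζᵢηⱼ} Q`. -/
def H2 (p δ : ℝ) (ζ η : ℂ) : Matrix (Fin 2) (Fin 2) ℝ :=
  Matrix.of fun i j => deriv (fun s : ℝ => dη p δ j (ζ + (s : ℂ) * dir i) η) 0

/-- The `ηη` block of the Hessian of `Q`: `(H₃)ᵢⱼ = ∂²_{ηᵢηⱼ} Q`. -/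
def H3 (p δ : ℝ) (ζ η : ℂ) : Matrix (Fin 2) (Fin 2) ℝ :=
  Matrix.of fun i j => deriv (fun s : ℝ => dη p δ j ζ (η + (s : ℂ) * dir i)) 0

def I1 (p δ : ℝ) (ζ η : ℂ) : Matrix (Fin 2) (Fin 2) ℝ :=
  !![H1 p δ ζ η 0 1, (H1 p δ ζ η 1 1 - H1 p δ ζ η 0 0) / 2;
     (H1 p δ ζ η 1 1 - H1 p δ ζ η 0 0) / 2, -(H1 p δ ζ η 0 1)]

def I2 (p δ : ℝ) (ζ η : ℂ) : Matrix (Fin 2) (Fin 2) ℝ :=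
  (1 / 2 : ℝ) •
    !![H2 p δ ζ η 1 0 - H2 p δ ζ η 0 1, H2 p δ ζ η 0 0 + H2 p δ ζ η 1 1;
       -(H2 p δ ζ η 0 0) - H2 p δ ζ η 1 1, H2 p δ ζ η 1 0 - H2 p δ ζ η 0 1]

def I3 (p δ : ℝ) (ζ η : ℂ) : Matrix (Fin 2) (Fin 2) ℝ :=
  !![H3 p δ ζ η 0 1, (H3 p δ ζ η 1 1 - H3 p δ ζ η 0 0) / 2;
     (H3 p δ ζ η 1 1 - H3 p δ ζ η 0 0) / 2, -(H3 p δ ζ η 0 1)]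


open scoped RealInnerProductSpace ComplexConjugate
open Filter Topology

section NormPowAlongLine

variable {E : Type*} [NormedAddCommGroup E] [InnerProductSpace ℝ E]

theorem hasDerivAt_norm_add_smul_sq (x v : E) :
    HasDerivAt (fun t : ℝ => ‖x + t • v‖ ^ 2) (2 * ⟪x, v⟫) 0 := by
  simpa using (((hasDerivAt_id (0 : ℝ)).smul_const v).const_add x).norm_sq

theorem hasDerivAt_norm_add_smul_rpow {x : E} (hx : x ≠ 0) (v : E) (α : ℝ) :
    HasDerivAt (fun t : ℝ => ‖x + t • v‖ ^ α) (α * ‖x‖ ^ (α - 2) * ⟪x, v⟫) 0 := by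
  have hpow (y : E) (β : ℝ) : (‖y‖ ^ 2) ^ (β / 2) = ‖y‖ ^ β := by
    rw [← Real.rpow_natCast, ← Real.rpow_mul (norm_nonneg y)]
    ring_nf
  have h := (hasDerivAt_norm_add_smul_sq x v).rpow_const (p := α / 2) (Or.inl (by simpa using hx))
  simp only [hpow, zero_smul, add_zero] at h
  convert h using 1
  rw [show α / 2 - 1 = (α - 2) / 2 by ring, hpow]
  ring

end NormPowAlongLine

theorem eventually_add_smul_mem {E : Type*} [NormedAddCommGroup E] [NormedSpace ℝ E]
    {s : Set E} (hs : IsOpen s) {x : E} (hx : x ∈ s) (v : E) :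
    ∀ᶠ t : ℝ in 𝓝 0, x + t • v ∈ s := by
  have h : Tendsto (fun t : ℝ => x + t • v) (𝓝 0) (𝓝 x) := by
    have hc : Continuous fun t : ℝ => x + t • v := by fun_prop
    simpa using hc.tendsto 0
  exact h (hs.mem_nhds hx)

section Qexp

variable {p : ℝ}

theorem qexp_pos (hp : 1 < p) : 0 < qexp p := div_pos (by linarith) (by linarith)

theorem one_lt_qexp (hp : 1 < p) : 1 < qexp p := by
  rw [qexp, one_lt_div (by linarith)]
  linarith

theorem qexp_lt_two (hp : 2 < p) : qexp p < 2 := by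
  rw [qexp, div_lt_iff₀ (by linarith)]
  linarith

theorem qexp_sub_one_mul (hp : 1 < p) : (qexp p - 1) * p = qexp p := by
  rw [qexp]
  field_simp [show p - 1 ≠ 0 by linarith]
  ring

theorem two_sub_qexp_mul_le (hp : 2 < p) :
    (2 - qexp p) * (2 + 2 * √(p - 1) / (p - 2)) ≤ 4 := by
  have hs : 1 ≤ √(p - 1) := by rw [Real.one_le_sqrt]; linarith
  have hs2 : √(p - 1) ^ 2 = p - 1 := Real.sq_sqrt (by linarith)
  have h : (2 - qexp p) * (2 + 2 * √(p - 1) / (p - 2)) = 2 * (2 - qexp p) + 2 / √(p - 1) := by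
    rw [qexp]
    field_simp [show p - 2 ≠ 0 by linarith, show p - 1 ≠ 0 by linarith]
    linear_combination (p - 2) * hs2
  rw [h, qexp]
  have h1 : 2 / √(p - 1) ≤ 2 := div_le_self (by norm_num) hs
  have h2 : 1 ≤ p / (p - 1) := by rw [one_le_div (by linarith)]; linarith
  linarith

end Qexp

def Ωb (p : ℝ) : Set (ℂ × ℂ) := {x | ‖x.1‖ ^ p < ‖x.2‖ ^ qexp p}

section Omega

variable {p δ : ℝ} {ζ η : ℂ}

theorem isOpen_Ωb (hp : 1 < p) : IsOpen (Ωb p) := by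
  have hq := qexp_pos hp
  exact isOpen_lt (continuous_fst.norm.rpow_const fun _ => Or.inr (by linarith))
    (continuous_snd.norm.rpow_const fun _ => Or.inr hq.le)

theorem ne_zero_of_mem_Ωb (hp : 1 < p) (h : (ζ, η) ∈ Ωb p) : η ≠ 0 := by
  rintro rfl
  have h' : ‖ζ‖ ^ p < 0 := by simpa [Ωb, Real.zero_rpow (qexp_pos hp).ne'] using h
  exact (Real.rpow_nonneg (norm_nonneg ζ) p).not_gt h'

theorem Q_of_mem_Ωb (h : (ζ, η) ∈ Ωb p) :
    Q p δ ζ η = ‖ζ‖ ^ p + ‖η‖ ^ qexp p + δ * (‖ζ‖ ^ 2 * ‖η‖ ^ (2 - qexp p)) := by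
  rw [Q, if_pos (le_of_lt h), Real.rpow_two]

theorem dη_of_mem_Ωb (hp : 1 < p) (h : (ζ, η) ∈ Ωb p) (j : Fin 2) :
    dη p δ j ζ η = (qexp p * ‖η‖ ^ (qexp p - 2)
      + δ * ‖ζ‖ ^ 2 * (2 - qexp p) * ‖η‖ ^ (-qexp p)) * ⟪η, dir j⟫ := by
  have hη := ne_zero_of_mem_Ωb hp h
  have hQ : (fun t : ℝ => Q p δ ζ (η + t * dir j)) =ᶠ[𝓝 0] fun t : ℝ =>
      ‖ζ‖ ^ p + ‖η + t • dir j‖ ^ qexp p + δ * (‖ζ‖ ^ 2 * ‖η + t • dir j‖ ^ (2 - qexp p)) := by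
    filter_upwards [eventually_add_smul_mem (isOpen_Ωb hp) h (0, dir j)] with t ht
    rw [← Complex.real_smul]
    exact Q_of_mem_Ωb (by simpa using ht)
  have hd := ((hasDerivAt_norm_add_smul_rpow hη (dir j) (qexp p)).const_add (‖ζ‖ ^ p)).fun_add
    (((hasDerivAt_norm_add_smul_rpow hη (dir j) (2 - qexp p)).const_mul (‖ζ‖ ^ 2)).const_mul δ)
  rw [dη, hQ.deriv_eq, hd.deriv, show 2 - qexp p - 2 = -qexp p by ring]
  ring

theorem H2_of_mem_Ωb (hp : 1 < p) (h : (ζ, η) ∈ Ωb p) (i j : Fin 2) :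
    H2 p δ ζ η i j = 2 * δ * (2 - qexp p) * ‖η‖ ^ (-qexp p) * ⟪ζ, dir i⟫ * ⟪η, dir j⟫ := by
  have hdη : (fun s : ℝ => dη p δ j (ζ + s * dir i) η) =ᶠ[𝓝 0] fun s : ℝ =>
      (qexp p * ‖η‖ ^ (qexp p - 2)
        + δ * ‖ζ + s • dir i‖ ^ 2 * (2 - qexp p) * ‖η‖ ^ (-qexp p)) * ⟪η, dir j⟫ := by
    filter_upwards [eventually_add_smul_mem (isOpen_Ωb hp) h (dir i, 0)] with s hs
    rw [← Complex.real_smul]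
    exact dη_of_mem_Ωb hp (by simpa using hs) j
  have hsq := ((hasDerivAt_norm_add_smul_sq ζ (dir i)).const_mul δ).mul_const (2 - qexp p)
  have hd := ((hsq.mul_const (‖η‖ ^ (-qexp p))).const_add
    (qexp p * ‖η‖ ^ (qexp p - 2))).mul_const ⟪η, dir j⟫
  rw [H2, Matrix.of_apply, hdη.deriv_eq, hd.deriv]
  ring

end Omega

def vecToComplex (u : Fin 2 → ℝ) : ℂ := ⟨u 0, u 1⟩

theorem sqrt_dotProduct_self (u : Fin 2 → ℝ) : √(u ⬝ᵥ u) = ‖vecToComplex u‖ := by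
  simp [Complex.norm_def, Complex.normSq_mk, vecToComplex, dotProduct, Fin.sum_univ_two]

/-- `!![a, b; -b, a]` acts on `ℝ² ≅ ℂ` as multiplication by `a - b * I`. -/
def rotPart (M : Matrix (Fin 2) (Fin 2) ℝ) : Matrix (Fin 2) (Fin 2) ℝ :=
  (1 / 2 : ℝ) • !![M 1 0 - M 0 1, M 0 0 + M 1 1; -(M 0 0) - M 1 1, M 1 0 - M 0 1]

theorem I2_eq_rotPart (p δ : ℝ) (ζ η : ℂ) : I2 p δ ζ η = rotPart (H2 p δ ζ η) := rfl

section RankOne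

variable {M : Matrix (Fin 2) (Fin 2) ℝ} {c : ℝ} {z w : ℂ}

theorem add_smul_rotPart_mulVec_dotProduct (hM : ∀ i j, M i j = c * ⟪z, dir i⟫ * ⟪w, dir j⟫)
    (t : ℝ) (u v : Fin 2 → ℝ) :
    ((M + t • rotPart M) *ᵥ u) ⬝ᵥ v = c * (⟪z, vecToComplex v⟫ * ⟪w, vecToComplex u⟫
      + t / 2 * (Complex.I * conj z * w * conj (vecToComplex u) * vecToComplex v).re) := by
  simp only [dotProduct, mulVec, rotPart, one_div, Fin.isValue, hM, dir, cons_val_one,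
    cons_val_fin_one, Complex.inner, Complex.mul_re, Complex.I_re, Complex.conj_re, zero_mul,
    Complex.I_im, Complex.conj_im, mul_neg, one_mul, sub_neg_eq_add, zero_add, cons_val_zero,
    smul_of, smul_cons, smul_eq_mul, smul_empty, Matrix.add_apply, of_apply, cons_val',
    Fin.sum_univ_two, Complex.one_re, Complex.one_im, add_zero, vecToComplex, Complex.mul_im,
    neg_zero]
  ring

theorem abs_add_smul_rotPart_mulVec_dotProduct_le
    (hM : ∀ i j, M i j = c * ⟪z, dir i⟫ * ⟪w, dir j⟫) (hc : 0 ≤ c) (t : ℝ) (u v : Fin 2 → ℝ) :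
    |((M + t • rotPart M) *ᵥ u) ⬝ᵥ v|
      ≤ c * (‖z‖ * ‖w‖) * (1 + |t| / 2) * (‖vecToComplex u‖ * ‖vecToComplex v‖) := by
  rw [add_smul_rotPart_mulVec_dotProduct hM, abs_mul, abs_of_nonneg hc]
  set U := vecToComplex u
  set V := vecToComplex v
  have h₁ : |⟪z, V⟫ * ⟪w, U⟫| ≤ ‖z‖ * ‖w‖ * (‖U‖ * ‖V‖) := by
    rw [abs_mul]
    calc |⟪z, V⟫| * |⟪w, U⟫| ≤ (‖z‖ * ‖V‖) * (‖w‖ * ‖U‖) := by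
          gcongr <;> exact abs_real_inner_le_norm _ _
      _ = ‖z‖ * ‖w‖ * (‖U‖ * ‖V‖) := by ring
  have h₂ : |(Complex.I * conj z * w * conj U * V).re| ≤ ‖z‖ * ‖w‖ * (‖U‖ * ‖V‖) := by
    refine (Complex.abs_re_le_norm _).trans_eq ?_
    simp only [norm_mul, Complex.norm_I, Complex.norm_conj]
    ring
  calc c * |⟪z, V⟫ * ⟪w, U⟫ + t / 2 * (Complex.I * conj z * w * conj U * V).re|
      ≤ c * (|⟪z, V⟫ * ⟪w, U⟫| + |t| / 2 * |(Complex.I * conj z * w * conj U * V).re|) := by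
        gcongr
        refine (abs_add_le _ _).trans_eq ?_
        rw [abs_mul (t / 2), abs_div, abs_two]
    _ ≤ c * (‖z‖ * ‖w‖ * (‖U‖ * ‖V‖) + |t| / 2 * (‖z‖ * ‖w‖ * (‖U‖ * ‖V‖))) := by gcongr
    _ = c * (‖z‖ * ‖w‖) * (1 + |t| / 2) * (‖U‖ * ‖V‖) := by ring

end RankOne

theorem rpow_neg_qexp_mul_norm_mul_norm_le_one {p : ℝ} {ζ η : ℂ} (hp : 1 < p)
    (h : (ζ, η) ∈ Ωb p) : ‖η‖ ^ (-qexp p) * (‖ζ‖ * ‖η‖) ≤ 1 := by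
  have hη : 0 < ‖η‖ := norm_pos_iff.mpr (ne_zero_of_mem_Ωb hp h)
  have hζ : ‖ζ‖ ≤ ‖η‖ ^ (qexp p - 1) := by
    refine (Real.rpow_le_rpow_iff (norm_nonneg ζ) (by positivity) (by linarith : 0 < p)).mp ?_
    rw [← Real.rpow_mul hη.le, qexp_sub_one_mul hp]
    exact le_of_lt h
  calc ‖η‖ ^ (-qexp p) * (‖ζ‖ * ‖η‖) ≤ ‖η‖ ^ (-qexp p) * (‖η‖ ^ (qexp p - 1) * ‖η‖ ^ (1 : ℝ)) := by
        rw [Real.rpow_one]; gcongr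
    _ = 1 := by rw [← Real.rpow_add hη, ← Real.rpow_add hη]; norm_num

theorem abs_tan_le_of_abs_le_arctan {φ T : ℝ} (h : |φ| ≤ arctan T) : |tan φ| ≤ T := by
  obtain ⟨hlo, hhi⟩ := abs_le.mp h
  have hT := arctan_mem_Ioo T
  have hφ : φ ∈ Set.Ioo (-(π / 2)) (π / 2) := ⟨by linarith [hT.2], by linarith [hT.2]⟩
  have hT' : -arctan T ∈ Set.Ioo (-(π / 2)) (π / 2) :=
    ⟨by linarith [hT.2], by linarith [hT.2, abs_nonneg φ]⟩
  refine abs_le.mpr ⟨?_, ?_⟩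
  · simpa [tan_neg, tan_arctan] using strictMonoOn_tan.monotoneOn hT' hφ hlo
  · simpa [tan_arctan] using strictMonoOn_tan.monotoneOn hφ hT hhi

theorem mixed_coeff_bound_of_mem_Ωb {p δ φ : ℝ} {ζ η : ℂ} (hp : 2 < p) (hδ : 0 ≤ δ)
    (h : (ζ, η) ∈ Ωb p) (hφ : |φ| ≤ arctan (2 * √(p - 1) / (p - 2))) :
    2 * δ * (2 - qexp p) * ‖η‖ ^ (-qexp p) * (‖ζ‖ * ‖η‖) * (1 + |tan φ| / 2) ≤ 4 * δ := by
  have hq := qexp_lt_two hp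
  have hζη := rpow_neg_qexp_mul_norm_mul_norm_le_one (by linarith) h
  have htan := abs_tan_le_of_abs_le_arctan hφ
  calc 2 * δ * (2 - qexp p) * ‖η‖ ^ (-qexp p) * (‖ζ‖ * ‖η‖) * (1 + |tan φ| / 2)
      = δ * ((2 - qexp p) * (2 + |tan φ|)) * (‖η‖ ^ (-qexp p) * (‖ζ‖ * ‖η‖)) := by ring
    _ ≤ δ * ((2 - qexp p) * (2 + 2 * √(p - 1) / (p - 2))) * 1 := by gcongr
    _ ≤ 4 * δ := by nlinarith [two_sub_qexp_mul_le hp]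

theorem stmt13 (p ε δ φ : ℝ) (hp : 2 < p) (hε : ε ∈ Set.Ioo (0 : ℝ) (1 / 2))
    (hδ : δ = 2 * qexp p * (qexp p - 1) * ε / 85)
    (hφ : |φ| ≤ Real.arctan (2 * Real.sqrt (p - 1) / (p - 2)))
    (ζ η : ℂ) (hb : ‖ζ‖ ^ p < ‖η‖ ^ qexp p) (ω₁ ω₂ : Fin 2 → ℝ) :
    -(8 * δ * Real.sqrt (ω₁ ⬝ᵥ ω₁) * Real.sqrt (ω₂ ⬝ᵥ ω₂)) ≤
      ((H2 p δ ζ η + Real.tan φ • I2 p δ ζ η).mulVec ω₁) ⬝ᵥ ω₂ := by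
  have hp₁ : 1 < p := by linarith
  have hΩ : (ζ, η) ∈ Ωb p := hb
  have hq₁ := one_lt_qexp hp₁
  have hδ₀ : 0 ≤ δ := by
    rw [hδ]
    have := mul_pos (mul_pos (qexp_pos hp₁) (sub_pos.mpr hq₁)) hε.1
    linarith
  have hc : 0 ≤ 2 * δ * (2 - qexp p) * ‖η‖ ^ (-qexp p) :=
    mul_nonneg (by nlinarith [qexp_lt_two hp]) (by positivity)
  have hbound := abs_add_smul_rotPart_mulVec_dotProduct_le (H2_of_mem_Ωb hp₁ hΩ) hc (tan φ) ω₁ ω₂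
  have hcoef := mixed_coeff_bound_of_mem_Ωb hp hδ₀ hΩ hφ
  rw [← I2_eq_rotPart] at hbound
  rw [sqrt_dotProduct_self, sqrt_dotProduct_self, mul_assoc (8 * δ)]
  refine le_trans (neg_le_neg (mul_le_mul_of_nonneg_right ?_ (by positivity))) (abs_le.mp hbound).1
  linarith
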